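/- arXiv:2003.06569 — 2 statements merged into one kernel-verified Lean document; each statement's English description precedes it below -/
import Mathlib

section
/- Let f, g be nonconstant polynomials in n ≥ 2 variables with f(0)=g(0)=0, let Γ(f/g) := Γ(f·g) be their joint Newton polyhedron, and let (t₀,…,t₀) be the unique intersection point of the diagonal D = {(t,…,t) : t ∈ ℝ} with the boundary of Γ(f/g). Then for every a ∈ ℝ₊^n one has σ(a) − (d(a,Γ(f)) + d(a,Γ(g)))·(1/t₀) ≥ 0, where σ(a) = a₁+…+a_n, with equality if and only if τ₀ ⊆ F(a, Γ(f/g)), where τ₀ is the smallest face of Γ(f/g) containing (t₀,…,t₀). -/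
open Finset Pointwise

variable {n : ℕ}

/-- The pairing `⟨k,x⟩ = ∑ i, k i * x i`. -/
noncomputable def dotp (k x : Fin n → ℝ) : ℝ := ∑ i, k i * x i

/-- Convex hull of the union of translated positive orthants `m + ℝ₊ⁿ`. -/
def orthHull (S : Set (Fin n → ℝ)) : Set (Fin n → ℝ) :=
  convexHull ℝ (⋃ m ∈ S, {x : Fin n → ℝ | ∀ i, m i ≤ x i})

/-- `Γ` is a Newton polyhedron: the convex hull of `⋃_{m ∈ supp} (m + ℝ₊ⁿ)`
for a nonempty finite set of lattice points (the support of a polynomial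
vanishing at the origin). -/
def IsNewtonPolyhedron (Γ : Set (Fin n → ℝ)) : Prop :=
  ∃ S : Finset (Fin n → ℕ), S.Nonempty ∧
    Γ = orthHull ((fun m : Fin n → ℕ => fun i => (m i : ℝ)) '' (S : Set (Fin n → ℕ)))

/-- `d(k,Γ) = min_{x ∈ Γ} ⟨k,x⟩`. -/
noncomputable def dval (k : Fin n → ℝ) (Γ : Set (Fin n → ℝ)) : ℝ :=
  sInf ((fun x => dotp k x) '' Γ)

/-- First meet locus `F(k,Γ) = {x ∈ Γ : ⟨k,x⟩ = d(k,Γ)}`. -/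
def fmeet (k : Fin n → ℝ) (Γ : Set (Fin n → ℝ)) : Set (Fin n → ℝ) :=
  {x ∈ Γ | dotp k x = dval k Γ}

/-- `σ(k) = ∑ i, k i`. -/
noncomputable def sigmaS (k : Fin n → ℝ) : ℝ := ∑ i, k i

/-- The smallest face of `Γ` containing a point `p`: the intersection of all
first meet loci (faces) containing `p`. -/
def minFace (Γ : Set (Fin n → ℝ)) (p : Fin n → ℝ) : Set (Fin n → ℝ) :=
  ⋂₀ {F | p ∈ F ∧ ∃ k : Fin n → ℝ, (∀ i, 0 ≤ k i) ∧ F = fmeet k Γ}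

/-- Cast a lattice vector to `ℝⁿ`. -/
def natVec (w : Fin n → ℕ) : Fin n → ℝ := fun i => (w i : ℝ)

/-- `w` is the primitive normal vector of a facet (face of dimension `n-1`) of `Γ`. -/
def IsPrimFacetNormal (Γ : Set (Fin n → ℝ)) (w : Fin n → ℕ) : Prop :=
  w ≠ 0 ∧ Finset.univ.gcd w = 1 ∧
    Module.finrank ℝ (affineSpan ℝ (fmeet (natVec w) Γ)).direction = n - 1

/-- `D(t₀)`: primitive normal vectors of the facets of `Γ` containing the
smallest face through the diagonal point `p = (t₀,…,t₀)`. -/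
def Dset (Γ : Set (Fin n → ℝ)) (p : Fin n → ℝ) : Set (Fin n → ℕ) :=
  {w | IsPrimFacetNormal Γ w ∧ minFace Γ p ⊆ fmeet (natVec w) Γ}

/-!
The diagonal point `p = (t₀,…,t₀)` lies on the frontier of the closed set `Γ = Γ(f) + Γ(g)`,
hence in `Γ`, so `d(a,Γ) ≤ ⟨a,p⟩ = t₀ σ(a)`; since `d(a,·)` is additive under Minkowski sums,
this is the inequality. Equality means `p ∈ F(a,Γ)`, and `F(a,Γ)` is one of the faces whose
intersection is `τ₀`.
-/

lemma orthHull_eq_convexHull_add_Ici (S : Set (Fin n → ℝ)) :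
    orthHull S = convexHull ℝ S + Set.Ici 0 := by
  have hunion : (⋃ m ∈ S, {x : Fin n → ℝ | ∀ i, m i ≤ x i}) = S + Set.Ici 0 := by
    ext x
    simp only [Set.mem_iUnion, Set.mem_add, Set.mem_Ici]
    constructor
    · rintro ⟨m, hm, hmx⟩
      exact ⟨m, hm, x - m, fun i => sub_nonneg.2 (hmx i), add_sub_cancel m x⟩
    · rintro ⟨m, hm, z, hz, rfl⟩
      exact ⟨m, hm, fun i => le_add_of_nonneg_right (hz i)⟩
  rw [orthHull, hunion, convexHull_add, (convex_Ici 0).convexHull_eq]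

lemma Set.Ici_zero_add_Ici_zero {M : Type*} [AddZeroClass M] [Preorder M] [AddLeftMono M]
    [AddRightMono M] : (Set.Ici 0 : Set M) + Set.Ici 0 = Set.Ici 0 :=
  ((Set.Ici_add_Ici_subset 0 0).trans_eq (congrArg Set.Ici (add_zero 0))).antisymm
    fun x hx => ⟨x, hx, 0, Set.self_mem_Ici, add_zero x⟩

lemma orthHull_add (S T : Set (Fin n → ℝ)) :
    orthHull (S + T) = orthHull S + orthHull T := by
  rw [orthHull_eq_convexHull_add_Ici, orthHull_eq_convexHull_add_Ici,
    orthHull_eq_convexHull_add_Ici, convexHull_add, add_add_add_comm,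
    Set.Ici_zero_add_Ici_zero]

lemma orthHull_subset_Ici_zero {S : Set (Fin n → ℝ)} (hS : S ⊆ Set.Ici 0) :
    orthHull S ⊆ Set.Ici 0 :=
  convexHull_min (Set.iUnion₂_subset fun _ hm _ hmx i => (hS hm i).trans (hmx i)) (convex_Ici 0)

namespace IsNewtonPolyhedron

variable {Γ Γ' : Set (Fin n → ℝ)}

lemma add (hΓ : IsNewtonPolyhedron Γ) (hΓ' : IsNewtonPolyhedron Γ') :
    IsNewtonPolyhedron (Γ + Γ') := by
  classical
  obtain ⟨S, hS, rfl⟩ := hΓ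
  obtain ⟨T, hT, rfl⟩ := hΓ'
  refine ⟨S + T, hS.add hT, ?_⟩
  rw [Finset.coe_add, ← orthHull_add]
  exact congrArg orthHull
    (Set.image_add (AddMonoidHom.compLeft (Nat.castAddMonoidHom ℝ) (Fin n))).symm

lemma nonempty (hΓ : IsNewtonPolyhedron Γ) : Γ.Nonempty := by
  obtain ⟨S, hS, rfl⟩ := hΓ
  rw [orthHull_eq_convexHull_add_Ici]
  exact ((hS.to_set.image _).convexHull).add Set.nonempty_Ici

lemma subset_Ici_zero (hΓ : IsNewtonPolyhedron Γ) : Γ ⊆ Set.Ici 0 := by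
  obtain ⟨S, -, rfl⟩ := hΓ
  refine orthHull_subset_Ici_zero ?_
  rintro _ ⟨m, -, rfl⟩ i
  exact Nat.cast_nonneg (m i)

lemma isClosed (hΓ : IsNewtonPolyhedron Γ) : IsClosed Γ := by
  obtain ⟨S, -, rfl⟩ := hΓ
  rw [orthHull_eq_convexHull_add_Ici]
  exact isClosed_Ici.add_left_of_isCompact
    ((S.finite_toSet.image _).isCompact_convexHull (𝕜 := ℝ))

end IsNewtonPolyhedron

lemma dotp_add (a x y : Fin n → ℝ) : dotp a (x + y) = dotp a x + dotp a y := by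
  simp only [dotp, Pi.add_apply, mul_add, Finset.sum_add_distrib]

lemma dotp_const (a : Fin n → ℝ) (t : ℝ) : dotp a (fun _ => t) = sigmaS a * t := by
  rw [dotp, sigmaS, Finset.sum_mul]

lemma bddBelow_image_dotp {a : Fin n → ℝ} (ha : 0 ≤ a) {A : Set (Fin n → ℝ)}
    (hA : A ⊆ Set.Ici 0) : BddBelow ((fun x => dotp a x) '' A) :=
  ⟨0, Set.forall_mem_image.2 fun _ hx =>
    Finset.sum_nonneg fun i _ => mul_nonneg (ha i) (hA hx i)⟩

lemma dval_le_dotp {a : Fin n → ℝ} (ha : 0 ≤ a) {A : Set (Fin n → ℝ)} (hA : A ⊆ Set.Ici 0)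
    {x : Fin n → ℝ} (hx : x ∈ A) : dval a A ≤ dotp a x :=
  csInf_le (bddBelow_image_dotp ha hA) ⟨x, hx, rfl⟩

lemma dval_add {a : Fin n → ℝ} (ha : 0 ≤ a) {A B : Set (Fin n → ℝ)}
    (hA : A.Nonempty) (hB : B.Nonempty) (hA₀ : A ⊆ Set.Ici 0) (hB₀ : B ⊆ Set.Ici 0) :
    dval a (A + B) = dval a A + dval a B := by
  rw [dval, dval, dval, ← Set.image2_add, Set.image_image2_distrib (dotp_add a), Set.image2_add]
  exact csInf_add (hA.image _) (bddBelow_image_dotp ha hA₀) (hB.image _)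
    (bddBelow_image_dotp ha hB₀)

lemma mem_minFace_self (Γ : Set (Fin n → ℝ)) (p : Fin n → ℝ) : p ∈ minFace Γ p :=
  Set.mem_sInter.2 fun _ hF => hF.1

lemma minFace_subset_fmeet_iff {Γ : Set (Fin n → ℝ)} {p a : Fin n → ℝ} (ha : ∀ i, 0 ≤ a i) :
    minFace Γ p ⊆ fmeet a Γ ↔ p ∈ fmeet a Γ :=
  ⟨fun h => h (mem_minFace_self Γ p), fun hp => Set.sInter_subset_of_mem ⟨hp, a, ha, rfl⟩⟩

theorem diagonal_inequality_and_equality_condition_general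
    (Γf Γg : Set (Fin n → ℝ))
    (hΓf : IsNewtonPolyhedron Γf) (hΓg : IsNewtonPolyhedron Γg)
    (t₀ : ℝ) (ht₀ : 0 < t₀)
    (hdiag : (fun _ : Fin n => t₀) ∈ frontier (Γf + Γg)) :
    ∀ a : Fin n → ℝ, (∀ i, 0 ≤ a i) →
      0 ≤ sigmaS a - (dval a Γf + dval a Γg) * (1 / t₀) ∧
      (sigmaS a - (dval a Γf + dval a Γg) * (1 / t₀) = 0 ↔
        minFace (Γf + Γg) (fun _ => t₀) ⊆ fmeet a (Γf + Γg)) := by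
  intro a ha
  have hΓ₀ : Γf + Γg ⊆ Set.Ici 0 := (hΓf.add hΓg).subset_Ici_zero
  have hp : (fun _ => t₀) ∈ Γf + Γg :=
    (hΓf.add hΓg).isClosed.closure_subset (frontier_subset_closure hdiag)
  have hgap : sigmaS a - (dval a Γf + dval a Γg) * (1 / t₀)
      = (dotp a (fun _ => t₀) - dval a (Γf + Γg)) / t₀ := by
    rw [dval_add ha hΓf.nonempty hΓg.nonempty hΓf.subset_Ici_zero hΓg.subset_Ici_zero,
      dotp_const]
    field_simp
  rw [hgap, minFace_subset_fmeet_iff ha]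
  refine ⟨div_nonneg (sub_nonneg.2 (dval_le_dotp ha hΓ₀ hp)) ht₀.le, ?_⟩
  rw [div_eq_zero_iff, sub_eq_zero, or_iff_left ht₀.ne']
  exact ⟨fun h => ⟨hp, h⟩, And.right⟩

/-- with `(t₀,…,t₀)` the intersection point of the diagonal with the
boundary of `Γ(f/g) = Γ(f) + Γ(g)`, for every `a ∈ ℝ₊ⁿ` one has
`σ(a) − (d(a,Γ(f)) + d(a,Γ(g)))·(1/t₀) ≥ 0`, with equality iff the smallest face
`τ₀` of `Γ(f/g)` through the diagonal point is contained in `F(a, Γ(f/g))`. -/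
theorem diagonal_inequality_and_equality_condition
    (hn : 2 ≤ n)
    (Γf Γg : Set (Fin n → ℝ))
    (hΓf : IsNewtonPolyhedron Γf) (hΓg : IsNewtonPolyhedron Γg)
    (t₀ : ℝ) (ht₀ : 0 < t₀)
    (hdiag : (fun _ : Fin n => t₀) ∈ frontier (Γf + Γg)) :
    ∀ a : Fin n → ℝ, (∀ i, 0 ≤ a i) →
      0 ≤ sigmaS a - (dval a Γf + dval a Γg) * (1 / t₀) ∧
      (sigmaS a - (dval a Γf + dval a Γg) * (1 / t₀) = 0 ↔
        minFace (Γf + Γg) (fun _ => t₀) ⊆ fmeet a (Γf + Γg)) :=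
  diagonal_inequality_and_equality_condition_general Γf Γg hΓf hΓg t₀ ht₀ hdiag
end

section
/- Let Γ(f), Γ(g) be Newton polyhedra in ℝ₊^n and let (t₀,…,t₀) be the diagonal intersection point with ∂Γ(fg). For every w ∈ ℝ₊^n with d(w,Γ(f)) − d(w,Γ(g)) > 0 (i.e. w ∈ T₋), one has −1/t₀ ≥ −σ(w)/(d(w,Γ(f)) + d(w,Γ(g))) ≥ −σ(w)/(d(w,Γ(f)) − d(w,Γ(g))). Consequently every candidate pole of the form −σ(w)/(d(w,Γ(f)) − d(w,Γ(g))) with w ∈ T₋ is at most −1/t₀. -/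
open Finset Pointwise

variable {n : ℕ}

/-! Since `(t₀,…,t₀)` lies in the closure of `Γf + Γg` and `⟨w,·⟩` is at least
`d(w,Γf) + d(w,Γg)` on that Minkowski sum, `σ(w) t₀ = ⟨w,(t₀,…,t₀)⟩ ≥ d(w,Γf) + d(w,Γg)`.
With `0 ≤ d(w,Γg) < d(w,Γf)` both inequalities are then elementary. -/

section NewtonPolyhedron

variable {Γ Γ' : Set (Fin n → ℝ)} {k x : Fin n → ℝ}

theorem IsNewtonPolyhedron.nonneg_of_mem (hΓ : IsNewtonPolyhedron Γ) (hx : x ∈ Γ) :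
    0 ≤ x := by
  obtain ⟨S, -, rfl⟩ := hΓ
  refine convexHull_min ?_ (convex_Ici 0) hx
  simp only [Set.iUnion_subset_iff, Set.forall_mem_image]
  intro m _ y hy i
  exact (Nat.cast_nonneg (m i)).trans (hy i)

theorem dotp_nonneg (hk : 0 ≤ k) (hx : 0 ≤ x) : 0 ≤ dotp k x :=
  Finset.sum_nonneg fun i _ => mul_nonneg (hk i) (hx i)

theorem dotp_add_right (k x y : Fin n → ℝ) : dotp k (x + y) = dotp k x + dotp k y := by
  simp only [dotp, Pi.add_apply, mul_add, Finset.sum_add_distrib]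

theorem dotp_const_right (k : Fin n → ℝ) (t : ℝ) : dotp k (fun _ => t) = sigmaS k * t := by
  simp only [dotp, sigmaS, Finset.sum_mul]

theorem continuous_dotp (k : Fin n → ℝ) : Continuous (dotp k) := by
  unfold dotp
  fun_prop

theorem dval_le_dotp_s6 (hΓ : ∀ x ∈ Γ, 0 ≤ x) (hk : 0 ≤ k) (hx : x ∈ Γ) :
    dval k Γ ≤ dotp k x :=
  csInf_le ⟨0, Set.forall_mem_image.2 fun y hy => dotp_nonneg hk (hΓ y hy)⟩ ⟨x, hx, rfl⟩

theorem dval_nonneg (hΓ : ∀ x ∈ Γ, 0 ≤ x) (hk : 0 ≤ k) : 0 ≤ dval k Γ :=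
  Real.sInf_nonneg (Set.forall_mem_image.2 fun y hy => dotp_nonneg hk (hΓ y hy))

theorem dval_add_dval_le_dotp_of_mem_closure (hΓ : ∀ x ∈ Γ, 0 ≤ x) (hΓ' : ∀ x ∈ Γ', 0 ≤ x)
    (hk : 0 ≤ k) (hx : x ∈ closure (Γ + Γ')) : dval k Γ + dval k Γ' ≤ dotp k x := by
  have hsum : Γ + Γ' ⊆ {y | dval k Γ + dval k Γ' ≤ dotp k y} := by
    rintro _ ⟨a, ha, b, hb, rfl⟩
    rw [Set.mem_ofPred_eq, dotp_add_right]
    exact add_le_add (dval_le_dotp_s6 hΓ hk ha) (dval_le_dotp_s6 hΓ' hk hb)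
  exact closure_minimal hsum (isClosed_le continuous_const (continuous_dotp k)) hx

end NewtonPolyhedron

theorem neg_div_chain_of_add_le_mul {a b s t : ℝ} (ht : 0 < t) (hb : 0 ≤ b) (hab : 0 < a - b)
    (hst : a + b ≤ s * t) : -(1 / t) ≥ -s / (a + b) ∧ -s / (a + b) ≥ -s / (a - b) := by
  have hsum : 0 < a + b := by linarith
  have hs : 0 < s := pos_of_mul_pos_left (hsum.trans_le hst) ht.le
  refine ⟨?_, ?_⟩
  · rw [ge_iff_le, neg_div, neg_le_neg_iff, div_le_div_iff₀ ht hsum]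
    linarith
  · rw [ge_iff_le, neg_div, neg_div, neg_le_neg_iff]
    exact div_le_div_of_nonneg_left hs.le hab (by linarith)

theorem negative_candidate_poles_bounded_by_diagonal_general
    (Γf Γg : Set (Fin n → ℝ))
    (hΓf : IsNewtonPolyhedron Γf) (hΓg : IsNewtonPolyhedron Γg)
    (t₀ : ℝ) (ht₀ : 0 < t₀)
    (hdiag : (fun _ : Fin n => t₀) ∈ frontier (Γf + Γg)) :
    ∀ w : Fin n → ℝ, (∀ i, 0 ≤ w i) →
      0 < dval w Γf - dval w Γg →
      (-(1 / t₀) ≥ -(sigmaS w) / (dval w Γf + dval w Γg) ∧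
       -(sigmaS w) / (dval w Γf + dval w Γg) ≥ -(sigmaS w) / (dval w Γf - dval w Γg) ∧
       -(sigmaS w) / (dval w Γf - dval w Γg) ≤ -(1 / t₀)) := by
  intro w hw hpos
  have hkey : dval w Γf + dval w Γg ≤ sigmaS w * t₀ := by
    rw [← dotp_const_right]
    exact dval_add_dval_le_dotp_of_mem_closure (fun _ => hΓf.nonneg_of_mem)
      (fun _ => hΓg.nonneg_of_mem) hw (frontier_subset_closure hdiag)
  obtain ⟨hleft, hright⟩ :=
    neg_div_chain_of_add_le_mul ht₀ (dval_nonneg (fun _ => hΓg.nonneg_of_mem) hw) hpos hkey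
  exact ⟨hleft, hright, hright.trans hleft⟩

/-- for every `w ∈ ℝ₊ⁿ` with `d(w,Γ(f)) − d(w,Γ(g)) > 0` (i.e. `w ∈ T₋`),
`−1/t₀ ≥ −σ(w)/(d(w,Γ(f)) + d(w,Γ(g))) ≥ −σ(w)/(d(w,Γ(f)) − d(w,Γ(g)))`;
consequently every negative candidate pole is at most `−1/t₀`. -/
theorem negative_candidate_poles_bounded_by_diagonal
    (hn : 2 ≤ n)
    (Γf Γg : Set (Fin n → ℝ))
    (hΓf : IsNewtonPolyhedron Γf) (hΓg : IsNewtonPolyhedron Γg)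
    (t₀ : ℝ) (ht₀ : 0 < t₀)
    (hdiag : (fun _ : Fin n => t₀) ∈ frontier (Γf + Γg)) :
    ∀ w : Fin n → ℝ, (∀ i, 0 ≤ w i) →
      0 < dval w Γf - dval w Γg →
      (-(1 / t₀) ≥ -(sigmaS w) / (dval w Γf + dval w Γg) ∧
       -(sigmaS w) / (dval w Γf + dval w Γg) ≥ -(sigmaS w) / (dval w Γf - dval w Γg) ∧
       -(sigmaS w) / (dval w Γf - dval w Γg) ≤ -(1 / t₀)) :=
  negative_candidate_poles_bounded_by_diagonal_general Γf Γg hΓf hΓg t₀ ht₀ hdiag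
end
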